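/- With μ ≥ 0 in the drifted Brownian motion setting above, there exist constants c₀, C₀ > 0 such that for all sufficiently small s > 0, c₀·s^{1/2} ≤ exp(-∑_{n=1}^∞ (e^{-rns}/n)·P[σB_{ns} + μns ≤ 0]) ≤ C₀·s^{1/(2√2)}. -/

import Mathlib

/-!
The probability in the `n`-th term is `P[N(0, t) ≤ -μt/σ]` with `t = (n+1)s`. It is at most `1/2`
because `μ ≥ 0`, and at least `e^{-(μ/σ)² t}/(2√2)` because `x² ≤ 2m² + 2(x+m)²` lets the `N(0, t)`
density dominate `e^{-m²/t}/√2` times the `N(-m, t/2)` density, whose mass on `(-∞, -m]` is `1/2`.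
With these bounds the series becomes a multiple of `∑ xⁿ⁺¹/(n+1) = -log(1 - x)`, so
`(1 - e^{-rs})^{1/2} ≤ e^{-S(s)} ≤ (1 - e^{-(r + μ²/σ²)s})^{1/(2√2)}`, and `1 - e^{-a}` lies between
`a/2` and `a` for `0 ≤ a ≤ 1`.
-/

open MeasureTheory ProbabilityTheory Real Set NNReal

lemma gaussianReal_real_Iic_self (m : ℝ) {v : ℝ≥0} (hv : v ≠ 0) :
    (gaussianReal m v).real (Iic m) = 1 / 2 := by
  have := nullSingletonClass_gaussianReal (μ := m) hv
  have hsymm : (gaussianReal m v).real (Ici m) = (gaussianReal m v).real (Iic m) := by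
    have hmap : (gaussianReal m v).map (2 * m - ·) = gaussianReal m v := by
      rw [gaussianReal_map_const_sub]; ring_nf
    rw [← hmap, map_measureReal_apply (by fun_prop) measurableSet_Iic]
    congr 1
    ext x
    simp only [mem_Ici, mem_preimage, mem_Iic]
    constructor <;> intro h <;> linarith
  have hsplit :=
    measureReal_add_measureReal_compl (μ := gaussianReal m v) (measurableSet_Iic (a := m))
  rw [compl_Iic, measureReal_congr Ioi_ae_eq_Ici, hsymm, probReal_univ] at hsplit
  linarith

lemma gaussianReal_real_Iic_le_half {m c : ℝ} {v : ℝ≥0} (hv : v ≠ 0) (hc : c ≤ m) :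
    (gaussianReal m v).real (Iic c) ≤ 1 / 2 :=
  gaussianReal_real_Iic_self m hv ▸ measureReal_mono (Iic_subset_Iic.mpr hc)

lemma exp_mul_gaussianPDFReal_le (m : ℝ) {v : ℝ≥0} (hv : v ≠ 0) (x : ℝ) :
    rexp (-m ^ 2 / v) / √2 * gaussianPDFReal (-m) (v / 2) x ≤ gaussianPDFReal 0 v x := by
  have hsqrt : √(2 * π * v) = √2 * √(2 * π * (v / 2 : ℝ≥0)) := by
    rw [← sqrt_mul zero_le_two]; push_cast; ring_nf
  calc rexp (-m ^ 2 / v) / √2 * gaussianPDFReal (-m) (v / 2) x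
      = (√2)⁻¹ * (√(2 * π * (v / 2 : ℝ≥0)))⁻¹
          * rexp (-m ^ 2 / v + -(x - -m) ^ 2 / (2 * (v / 2 : ℝ≥0))) := by
        rw [gaussianPDFReal, exp_add]; ring
    _ ≤ (√2)⁻¹ * (√(2 * π * (v / 2 : ℝ≥0)))⁻¹ * rexp (-(x - 0) ^ 2 / (2 * v)) := by
        gcongr
        push_cast
        field_simp
        nlinarith [sq_nonneg (x + 2 * m)]
    _ = gaussianPDFReal 0 v x := by rw [gaussianPDFReal, hsqrt, mul_inv]

lemma gaussianReal_real_eq_setIntegral (m : ℝ) {v : ℝ≥0} (hv : v ≠ 0) (s : Set ℝ) :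
    (gaussianReal m v).real s = ∫ x in s, gaussianPDFReal m v x := by
  rw [measureReal_def, gaussianReal_apply_eq_integral m hv,
    ENNReal.toReal_ofReal (setIntegral_nonneg_of_ae (ae_of_all _ (gaussianPDFReal_nonneg m v)))]

lemma exp_div_le_gaussianReal_real_Iic (m : ℝ) {v : ℝ≥0} (hv : v ≠ 0) :
    rexp (-m ^ 2 / v) / (2 * √2) ≤ (gaussianReal 0 v).real (Iic (-m)) := by
  have hv2 : v / 2 ≠ 0 := by simpa using hv
  have hhalf := gaussianReal_real_Iic_self (-m) hv2
  rw [gaussianReal_real_eq_setIntegral _ hv2] at hhalf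
  rw [gaussianReal_real_eq_setIntegral _ hv]
  calc rexp (-m ^ 2 / v) / (2 * √2)
      = ∫ x in Iic (-m), rexp (-m ^ 2 / v) / √2 * gaussianPDFReal (-m) (v / 2) x := by
        rw [integral_const_mul, hhalf]; ring
    _ ≤ ∫ x in Iic (-m), gaussianPDFReal 0 v x :=
        setIntegral_mono ((integrable_gaussianPDFReal _ _).const_mul _).integrableOn
          (integrable_gaussianPDFReal _ _).integrableOn (exp_mul_gaussianPDFReal_le m hv)

lemma measure_mul_add_nonpos {Ω : Type*} [MeasurableSpace Ω] {P : Measure Ω} {X : Ω → ℝ}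
    {ν : Measure ℝ} [NeZero ν] (hX : P.map X = ν) {σ : ℝ} (hσ : 0 < σ) (a : ℝ) :
    P {ω | σ * X ω + a ≤ 0} = ν (Iic (-a / σ)) := by
  have hXm : AEMeasurable X P := aemeasurable_of_map_neZero (hX ▸ inferInstance)
  have hset : {ω | σ * X ω + a ≤ 0} = X ⁻¹' Iic (-a / σ) := by
    ext ω
    change σ * X ω + a ≤ 0 ↔ X ω ≤ -a / σ
    rw [le_div_iff₀ hσ]
    constructor <;> intro h <;> linarith
  rw [hset, ← Measure.map_apply_of_aemeasurable hXm measurableSet_Iic, hX]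

lemma toReal_measure_drift_nonpos_mem_Icc {Ω : Type*} [MeasurableSpace Ω] {P : Measure Ω}
    {X : Ω → ℝ} {t : ℝ} (ht : 0 < t) (hX : P.map X = gaussianReal 0 t.toNNReal)
    {σ μ : ℝ} (hσ : 0 < σ) (hμ : 0 ≤ μ) :
    (P {ω | σ * X ω + μ * t ≤ 0}).toReal ∈ Icc (rexp (-((μ / σ) ^ 2 * t)) / (2 * √2)) (1 / 2) := by
  have hv : t.toNNReal ≠ 0 := by simpa using ht
  rw [measure_mul_add_nonpos hX hσ, ← measureReal_def, neg_div]
  constructor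
  · have hexp : -(μ * t / σ) ^ 2 / (t.toNNReal : ℝ) = -((μ / σ) ^ 2 * t) := by
      rw [Real.coe_toNNReal t ht.le]; field_simp
    exact hexp ▸ exp_div_le_gaussianReal_real_Iic (μ * t / σ) hv
  · exact gaussianReal_real_Iic_le_half hv (by rw [neg_nonpos]; positivity)

lemma exp_neg_mul_neg_log (c : ℝ) {y : ℝ} (hy : 0 < y) : rexp (-(c * -log y)) = y ^ c := by
  rw [rpow_def_of_pos hy]; ring_nf

lemma one_sub_rpow_le_exp_neg_tsum {f : ℕ → ℝ} {c x : ℝ} (hx : |x| < 1)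
    (hf0 : ∀ n, 0 ≤ f n) (hf : ∀ n, f n ≤ c * (x ^ (n + 1) / (n + 1))) :
    (1 - x) ^ c ≤ rexp (-∑' n, f n) := by
  have hlog := (hasSum_pow_div_log_of_abs_lt_one hx).mul_left c
  have htsum : ∑' n, f n ≤ c * -log (1 - x) :=
    hlog.tsum_eq ▸ Summable.tsum_le_tsum hf (hlog.summable.of_nonneg_of_le hf0 hf) hlog.summable
  rw [← exp_neg_mul_neg_log c (by linarith [le_abs_self x])]
  exact exp_le_exp.mpr (neg_le_neg htsum)

lemma exp_neg_tsum_le_one_sub_rpow {f : ℕ → ℝ} {c y : ℝ} (hy : |y| < 1) (hf : Summable f)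
    (hfy : ∀ n, c * (y ^ (n + 1) / (n + 1)) ≤ f n) :
    rexp (-∑' n, f n) ≤ (1 - y) ^ c := by
  have hlog := (hasSum_pow_div_log_of_abs_lt_one hy).mul_left c
  have htsum : c * -log (1 - y) ≤ ∑' n, f n :=
    hlog.tsum_eq ▸ Summable.tsum_le_tsum hfy hlog.summable hf
  rw [← exp_neg_mul_neg_log c (by linarith [le_abs_self y])]
  exact exp_le_exp.mpr (neg_le_neg htsum)

lemma exp_neg_mul_pow_succ (a s : ℝ) (n : ℕ) :
    rexp (-(a * s)) ^ (n + 1) = rexp (-a * (n + 1) * s) := by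
  rw [← exp_nat_mul]; push_cast; ring_nf

lemma abs_exp_neg_mul_lt_one {a s : ℝ} (ha : 0 < a) (hs : 0 < s) : |rexp (-(a * s))| < 1 := by
  rw [abs_of_pos (exp_pos _), exp_lt_one_iff, neg_lt_zero]; positivity

section LogSeries

variable {r s : ℝ} {p : ℕ → ℝ}

lemma one_sub_exp_rpow_le_exp_neg_tsum (hr : 0 < r) (hs : 0 < s) (hp0 : ∀ n, 0 ≤ p n)
    (hp : ∀ n, p n ≤ 1 / 2) :
    (1 - rexp (-(r * s))) ^ ((1 : ℝ) / 2)
      ≤ rexp (-∑' n : ℕ, rexp (-r * (n + 1) * s) / (n + 1) * p n) :=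
  one_sub_rpow_le_exp_neg_tsum (abs_exp_neg_mul_lt_one hr hs) (fun n ↦ by have := hp0 n; positivity)
    fun n ↦ by rw [exp_neg_mul_pow_succ, mul_comm]; gcongr; exact hp n

lemma exp_neg_tsum_le_one_sub_exp_rpow {κ : ℝ} (hr : 0 < r) (hκ : 0 ≤ κ) (hs : 0 < s)
    (hp_le : ∀ n, p n ≤ 1 / 2) (hp : ∀ n : ℕ, rexp (-(κ * ((n + 1) * s))) / (2 * √2) ≤ p n) :
    rexp (-∑' n : ℕ, rexp (-r * (n + 1) * s) / (n + 1) * p n)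
      ≤ (1 - rexp (-((r + κ) * s))) ^ ((1 : ℝ) / (2 * √2)) := by
  have hp0 (n : ℕ) : 0 ≤ p n := le_trans (by positivity) (hp n)
  have hsum : Summable fun n : ℕ ↦ rexp (-r * (n + 1) * s) / (n + 1) * p n :=
    ((hasSum_pow_div_log_of_abs_lt_one (abs_exp_neg_mul_lt_one hr hs)).mul_left (1 / 2)).summable
      |>.of_nonneg_of_le (fun n ↦ by have := hp0 n; positivity)
        fun n ↦ by rw [exp_neg_mul_pow_succ, mul_comm]; gcongr; exact hp_le n
  refine exp_neg_tsum_le_one_sub_rpow (abs_exp_neg_mul_lt_one (by positivity) hs) hsum fun n ↦ ?_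
  calc 1 / (2 * √2) * (rexp (-((r + κ) * s)) ^ (n + 1) / (n + 1))
      = rexp (-r * (n + 1) * s) / (n + 1) * (rexp (-(κ * ((n + 1) * s))) / (2 * √2)) := by
        rw [exp_neg_mul_pow_succ,
          show -(r + κ) * (n + 1) * s = -r * (n + 1) * s + -(κ * ((n + 1) * s)) by ring, exp_add]
        ring
    _ ≤ _ := by gcongr; exact hp n

end LogSeries

lemma div_two_le_one_sub_exp_neg {a : ℝ} (ha0 : 0 ≤ a) (ha1 : a ≤ 1) : a / 2 ≤ 1 - rexp (-a) := by
  have h : rexp (-a) * (1 + a) ≤ 1 := by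
    calc rexp (-a) * (1 + a) ≤ rexp (-a) * rexp a := by gcongr; linarith [add_one_le_exp a]
      _ = 1 := by rw [← exp_add, neg_add_cancel, exp_zero]
  nlinarith [exp_pos (-a)]

lemma rpow_mul_rpow_le_one_sub_exp_neg_rpow {r s e : ℝ} (hr : 0 ≤ r) (hs : 0 ≤ s)
    (hrs : r * s ≤ 1) (he : 0 ≤ e) : (r / 2) ^ e * s ^ e ≤ (1 - rexp (-(r * s))) ^ e := by
  rw [← mul_rpow (by positivity) hs, div_mul_eq_mul_div]
  gcongr
  exact div_two_le_one_sub_exp_neg (by positivity) hrs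

lemma one_sub_exp_neg_rpow_le {b s e : ℝ} (hb : 0 ≤ b) (hs : 0 ≤ s) (he : 0 ≤ e) :
    (1 - rexp (-(b * s))) ^ e ≤ b ^ e * s ^ e := by
  rw [← mul_rpow hb hs]
  gcongr
  · linarith [exp_le_one_iff.mpr (neg_nonpos.mpr (mul_nonneg hb hs))]
  · linarith [one_sub_le_exp_neg (b * s)]

theorem scaling_nonneg_drift_general {Ω : Type*} [MeasurableSpace Ω]
    (P : Measure Ω)
    (B : ℝ → Ω → ℝ)
    (hB : ∀ t : ℝ, 0 ≤ t → Measure.map (B t) P = gaussianReal 0 t.toNNReal)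
    (σ μ r : ℝ) (hσ : 0 < σ) (hμ : 0 ≤ μ) (hr : 0 < r)
    (S : ℝ → ℝ)
    (hS : ∀ s : ℝ, 0 < s → S s = ∑' n : ℕ,
      Real.exp (-r * (n + 1) * s) / (n + 1) *
        (P {ω | σ * B ((n + 1) * s) ω + μ * ((n + 1) * s) ≤ 0}).toReal) :
    ∃ c₀ C₀ : ℝ, 0 < c₀ ∧ 0 < C₀ ∧ ∃ s₀ : ℝ, 0 < s₀ ∧ ∀ s : ℝ, 0 < s → s ≤ s₀ →
      c₀ * s ^ ((1 : ℝ) / 2) ≤ Real.exp (-S s) ∧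
      Real.exp (-S s) ≤ C₀ * s ^ ((1 : ℝ) / (2 * Real.sqrt 2)) := by
  set κ := (μ / σ) ^ 2
  refine ⟨(r / 2) ^ ((1 : ℝ) / 2), (r + κ) ^ ((1 : ℝ) / (2 * √2)), by positivity, by positivity,
    1 / r, by positivity, fun s hs hsr => ?_⟩
  have hprob (n : ℕ) := toReal_measure_drift_nonpos_mem_Icc (by positivity)
    (hB ((n + 1) * s) (by positivity)) hσ hμ
  rw [hS s hs]
  constructor
  · calc _ ≤ (1 - rexp (-(r * s))) ^ ((1 : ℝ) / 2) :=
          rpow_mul_rpow_le_one_sub_exp_neg_rpow hr.le hs.le (by rwa [le_div_iff₀' hr] at hsr)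
            (by norm_num)
      _ ≤ _ := one_sub_exp_rpow_le_exp_neg_tsum hr hs (fun n ↦ ENNReal.toReal_nonneg)
          fun n ↦ (hprob n).2
  · calc _ ≤ (1 - rexp (-((r + κ) * s))) ^ ((1 : ℝ) / (2 * √2)) :=
          exp_neg_tsum_le_one_sub_exp_rpow hr (by positivity) hs (fun n ↦ (hprob n).2)
            fun n ↦ (hprob n).1
      _ ≤ _ := one_sub_exp_neg_rpow_le (by positivity) hs.le (by positivity)

/-- Natural scaling, nonnegative drift: there are `c₀, C₀ > 0` with
`c₀·s^{1/2} ≤ exp(-S(s)) ≤ C₀·s^{1/(2√2)}` for all sufficiently small `s > 0`. -/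
theorem scaling_nonneg_drift {Ω : Type*} [MeasurableSpace Ω]
    (P : Measure Ω) [IsProbabilityMeasure P]
    (B : ℝ → Ω → ℝ)
    (hB : ∀ t : ℝ, 0 ≤ t → Measure.map (B t) P = gaussianReal 0 t.toNNReal)
    (σ μ r : ℝ) (hσ : 0 < σ) (hμ : 0 ≤ μ) (hr : 0 < r)
    (S : ℝ → ℝ)
    (hS : ∀ s : ℝ, 0 < s → S s = ∑' n : ℕ,
      Real.exp (-r * (n + 1) * s) / (n + 1) *
        (P {ω | σ * B ((n + 1) * s) ω + μ * ((n + 1) * s) ≤ 0}).toReal) :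
    ∃ c₀ C₀ : ℝ, 0 < c₀ ∧ 0 < C₀ ∧ ∃ s₀ : ℝ, 0 < s₀ ∧ ∀ s : ℝ, 0 < s → s ≤ s₀ →
      c₀ * s ^ ((1 : ℝ) / 2) ≤ Real.exp (-S s) ∧
      Real.exp (-S s) ≤ C₀ * s ^ ((1 : ℝ) / (2 * Real.sqrt 2)) :=
  scaling_nonneg_drift_general P B hB σ μ r hσ hμ hr S hS
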